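/- arXiv:2410.17129 — 2 statements merged into one kernel-verified Lean document; each statement's English description precedes it below -/
import Mathlib

section
/- For every n ≥ 1 there is a group isomorphism from the presented group ⟨a,b ∣ (ab)^n = (ba)^n⟩ to the presented group ⟨x,t ∣ x^n = t x^n t⁻¹⟩ sending a ↦ x t⁻¹ and b ↦ t. -/
/-!
Put `x = ab` and `t = b`; this change of generators is invertible, with `a = x t⁻¹`.
Since `(ba)^n = b (ab)^n b⁻¹`, the relation `(ab)^n = (ba)^n` reads `x^n = t x^n t⁻¹` in the new
generators, so the two presentations are related by a Tietze transformation.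
-/

/-- The single relation `(ab)^n = (ba)^n`, with `a = true` and `b = false`. -/
def relsAB (n : ℕ) : Set (FreeGroup Bool) :=
  {(FreeGroup.of true * FreeGroup.of false) ^ n *
    ((FreeGroup.of false * FreeGroup.of true) ^ n)⁻¹}

/-- The single relation `x^n = t x^n t⁻¹`, with `x = true` and `t = false`. -/
def relsXT (n : ℕ) : Set (FreeGroup Bool) :=
  {(FreeGroup.of true) ^ n *
    (FreeGroup.of false * (FreeGroup.of true) ^ n * (FreeGroup.of false)⁻¹)⁻¹}

open PresentedGroup

section

variable {G : Type*} [Group G] {n : ℕ}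

theorem mul_pow_eq_swap_pow_iff_eq_conj {a b : G} :
    (a * b) ^ n = (b * a) ^ n ↔ (a * b) ^ n = b * (a * b) ^ n * b⁻¹ := by
  rw [eq_mul_inv_of_mul_eq (mul_pow_mul b a n)]

def liftAB (a b : G) (h : (a * b) ^ n = (b * a) ^ n) : PresentedGroup (relsAB n) →* G :=
  toGroup (f := fun i => if i then a else b) <| by
    rintro r rfl
    simp only [map_mul, map_pow, map_inv, FreeGroup.lift_apply_of, ite_true, Bool.false_eq_true,
      ite_false]
    exact mul_inv_eq_one.2 h

@[simp]
theorem liftAB_of_true (a b : G) (h : (a * b) ^ n = (b * a) ^ n) :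
    liftAB a b h (of true) = a :=
  toGroup.of _

@[simp]
theorem liftAB_of_false (a b : G) (h : (a * b) ^ n = (b * a) ^ n) :
    liftAB a b h (of false) = b :=
  toGroup.of _

def liftXT (x t : G) (h : x ^ n = t * x ^ n * t⁻¹) : PresentedGroup (relsXT n) →* G :=
  toGroup (f := fun i => if i then x else t) <| by
    rintro r rfl
    simp only [map_mul, map_pow, map_inv, FreeGroup.lift_apply_of, ite_true, Bool.false_eq_true,
      ite_false]
    exact mul_inv_eq_one.2 h

@[simp]
theorem liftXT_of_true (x t : G) (h : x ^ n = t * x ^ n * t⁻¹) :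
    liftXT x t h (of true) = x :=
  toGroup.of _

@[simp]
theorem liftXT_of_false (x t : G) (h : x ^ n = t * x ^ n * t⁻¹) :
    liftXT x t h (of false) = t :=
  toGroup.of _

end

theorem relsAB_holds (n : ℕ) :
    (of true * of false : PresentedGroup (relsAB n)) ^ n = (of false * of true) ^ n :=
  mk_eq_mk_of_mul_inv_mem rfl

theorem relsXT_holds (n : ℕ) :
    (of true : PresentedGroup (relsXT n)) ^ n = of false * of true ^ n * (of false)⁻¹ :=
  mk_eq_mk_of_mul_inv_mem rfl

def abToXT (n : ℕ) : PresentedGroup (relsAB n) →* PresentedGroup (relsXT n) :=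
  liftAB (of true * (of false)⁻¹) (of false) <| mul_pow_eq_swap_pow_iff_eq_conj.2 <| by
    simpa only [inv_mul_cancel_right] using relsXT_holds n

def xtToAB (n : ℕ) : PresentedGroup (relsXT n) →* PresentedGroup (relsAB n) :=
  liftXT (of true * of false) (of false) (mul_pow_eq_swap_pow_iff_eq_conj.1 (relsAB_holds n))

theorem presentedGroup_ab_iso_xt_general (n : ℕ) :
    ∃ e : PresentedGroup (relsAB n) ≃* PresentedGroup (relsXT n),
      e (PresentedGroup.of true) =
        PresentedGroup.of true * (PresentedGroup.of false)⁻¹ ∧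
      e (PresentedGroup.of false) = PresentedGroup.of false := by
  have left_inv : (xtToAB n).comp (abToXT n) = MonoidHom.id _ := by
    ext (_ | _) <;> simp [abToXT, xtToAB]
  have right_inv : (abToXT n).comp (xtToAB n) = MonoidHom.id _ := by
    ext (_ | _) <;> simp [abToXT, xtToAB]
  refine ⟨(abToXT n).toMulEquiv (xtToAB n) left_inv right_inv, ?_, ?_⟩ <;> simp [abToXT]

/-- For every `n ≥ 1` there is a group isomorphism
`⟨a,b ∣ (ab)^n = (ba)^n⟩ ≃ ⟨x,t ∣ x^n = t x^n t⁻¹⟩` with `a ↦ x t⁻¹` and `b ↦ t`. -/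
theorem presentedGroup_ab_iso_xt (n : ℕ) (hn : 1 ≤ n) :
    ∃ e : PresentedGroup (relsAB n) ≃* PresentedGroup (relsXT n),
      e (PresentedGroup.of true) =
        PresentedGroup.of true * (PresentedGroup.of false)⁻¹ ∧
      e (PresentedGroup.of false) = PresentedGroup.of false :=
  presentedGroup_ab_iso_xt_general n
end

section
/- Let Γ be any defining graph, A_Γ the associated Artin group, s a standard generator, and g ∈ A_Γ such that g ⟨s⟩ g⁻¹ ⊆ ⟨s⟩ (conjugation by g maps the cyclic subgroup generated by s into itself). Then g s g⁻¹ = s, i.e., g centralizes s. -/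
/-- The alternating product `a * b * a * ⋯` with `n` factors. -/
def altProd {M : Type*} [Monoid M] : M → M → ℕ → M
  | _, _, 0 => 1
  | a, b, n + 1 => a * altProd b a n

/-- A defining graph: a finite simplicial graph with each edge labelled by a natural
number `≥ 2`. -/
structure DefiningGraph (V : Type*) where
  graph : SimpleGraph V
  label : V → V → ℕ
  label_symm : ∀ a b, label a b = label b a
  two_le_label : ∀ a b, graph.Adj a b → 2 ≤ label a b

/-- The Artin relations `π(a,b;m_ab) = π(b,a;m_ab)`, one for each edge `{a,b}` of the
defining graph. -/
def DefiningGraph.rels {V : Type*} (Γ : DefiningGraph V) : Set (FreeGroup V) :=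
  {r | ∃ a b, Γ.graph.Adj a b ∧
    r = altProd (FreeGroup.of a) (FreeGroup.of b) (Γ.label a b) *
      (altProd (FreeGroup.of b) (FreeGroup.of a) (Γ.label a b))⁻¹}

/-- The Artin group of a defining graph, as a presented group. The standard generator
corresponding to a vertex `v` is `PresentedGroup.of v`. -/
abbrev ArtinGroup {V : Type*} (Γ : DefiningGraph V) : Type _ := PresentedGroup Γ.rels

/-! Every Artin relation has the same number of letters on both sides, so sending each
generator to `1 ∈ ℤ` defines the exponent-sum homomorphism `A_Γ → ℤ`. If `g s g⁻¹ = sᵏ`,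
comparing exponent sums gives `k = 1`. -/

theorem MonoidHom.map_altProd {M N : Type*} [Monoid M] [Monoid N] (f : M →* N) (a b : M)
    (n : ℕ) : f (altProd a b n) = altProd (f a) (f b) n := by
  induction n generalizing a b with
  | zero => exact f.map_one
  | succ n ih => rw [altProd, altProd, f.map_mul, ih]

theorem conj_eq_self_of_conj_mem_zpowers {G H : Type*} [Group G] [CommGroup H]
    [IsMulTorsionFree H] (φ : G →* H) {x : G} (hx : φ x ≠ 1) {g : G}
    (hg : g * x * g⁻¹ ∈ Subgroup.zpowers x) : g * x * g⁻¹ = x := by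
  obtain ⟨k, hk⟩ := Subgroup.mem_zpowers_iff.mp hg
  have hφ : φ x ^ k = φ x ^ (1 : ℤ) := by
    rw [← map_zpow, hk, map_mul, map_mul, map_inv, mul_inv_cancel_comm, zpow_one]
  rw [← hk, injective_zpow_iff_not_isOfFinOrder.mpr (not_isOfFinOrder_of_isMulTorsionFree hx) hφ,
    zpow_one]

namespace ArtinGroup

variable {V : Type*} (Γ : DefiningGraph V)

def liftConst {H : Type*} [Group H] (t : H) : ArtinGroup Γ →* H :=
  PresentedGroup.toGroup (f := fun _ => t) <| by
    rintro _ ⟨a, b, -, rfl⟩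
    rw [map_mul, map_inv, MonoidHom.map_altProd, MonoidHom.map_altProd, FreeGroup.lift_apply_of,
      FreeGroup.lift_apply_of, mul_inv_cancel]

theorem liftConst_of {H : Type*} [Group H] (t : H) (v : V) :
    liftConst Γ t (PresentedGroup.of v) = t :=
  PresentedGroup.toGroup.of _

abbrev exponentSum : ArtinGroup Γ →* Multiplicative ℤ :=
  liftConst Γ (Multiplicative.ofAdd 1)

end ArtinGroup

theorem centralizes_of_conj_cyclic_le_general {V : Type*} (Γ : DefiningGraph V)
    (s : V) (g : ArtinGroup Γ)
    (h : ∀ x ∈ Subgroup.closure {(PresentedGroup.of s : ArtinGroup Γ)},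
      g * x * g⁻¹ ∈ Subgroup.closure {(PresentedGroup.of s : ArtinGroup Γ)}) :
    g * PresentedGroup.of s * g⁻¹ = PresentedGroup.of s := by
  have hs := h _ (Subgroup.mem_closure_singleton_self _)
  rw [← Subgroup.zpowers_eq_closure] at hs
  refine conj_eq_self_of_conj_mem_zpowers (ArtinGroup.exponentSum Γ) ?_ hs
  rw [ArtinGroup.liftConst_of]
  decide

/-- If conjugation by `g` maps the cyclic subgroup `⟨s⟩` generated by a standard generator
into itself, then `g` centralizes `s`. -/
theorem centralizes_of_conj_cyclic_le {V : Type*} [Fintype V] (Γ : DefiningGraph V)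
    (s : V) (g : ArtinGroup Γ)
    (h : ∀ x ∈ Subgroup.closure {(PresentedGroup.of s : ArtinGroup Γ)},
      g * x * g⁻¹ ∈ Subgroup.closure {(PresentedGroup.of s : ArtinGroup Γ)}) :
    g * PresentedGroup.of s * g⁻¹ = PresentedGroup.of s :=
  centralizes_of_conj_cyclic_le_general Γ s g h
end
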